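/- Let A be a deterministic projective M-regular algorithm on a list of at least three items. Then there is a function F on unary projections with 1 ≤ F(x^i) ≤ i for i ≥ M such that for any two items x,y and any request sequence σ with at least M requests to x and at least M requests to y, x is in front of y in S(σ) if and only if the F(σ_x)-th request to x occurs after the F(σ_y)-th request to y in σ. -/

import Mathlib

abbrev Before {I : Type} [DecidableEq I] (x y : I) (L : List I) : Prop :=
  L.idxOf x < L.idxOf y

def proj2 {I : Type} [DecidableEq I] (x y : I) (σ : List I) : List I :=
  σ.filter (fun z => decide (z = x ∨ z = y))

def Projective {I : Type} [DecidableEq I] (S : List I → List I) : Prop :=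
  ∀ (x y : I) (σ : List I), Before x y (S σ) ↔ Before x y (S (proj2 x y σ))

/-- `M`-regularity: after `σ x^M`, item `x` is in front of all other items. -/
def MRegular {I : Type} [DecidableEq I] (M : ℕ) (S : List I → List I) : Prop :=
  ∀ (σ : List I) (x : I), (S (σ ++ List.replicate M x)).head? = some x

/-- Position (index in `σ`) of the `q`-th request to `x` (1-based `q`). -/
def occPos {I : Type} [DecidableEq I] (σ : List I) (x : I) (q : ℕ) : ℕ :=
  ((List.range σ.length).filter (fun m => decide (σ[m]? = some x))).getD (q - 1) 0

/-!
Fix `x`. Interleaving two sandwiches `x^(a+d) v^m' x^c` and `x^a u^m x^(d+c)` into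
`x^a u^m x^d v^m' x^c` and projecting onto each pair shows, by `M`-regularity, that `x` in front
of `v` in the first forces `x` in front of `u` in the second (via a third item when `u = v`).
So whether `x` stays in front of its partner after `x^a v^M x^c` depends only on whether `a` lies
below a threshold `F(x^(a+c))`. For a general `σ`, cut it right after the `F(σ_y)`-th request
to `y` and insert `z^M` for a third item `z`: the projections onto `{x, z}` and `{y, z}` are
sandwiches, so `x` is in front of `z` iff the `F(σ_x)`-th request to `x` comes later, and `z` is
in front of `y`. Transitivity and projectivity onto `{x, y}` conclude.
-/

section CriticalRequests

open List

variable {I : Type} [DecidableEq I] {S : List I → List I} {M : ℕ}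

theorem exists_ne_ne_of_three (h : ∃ a b c : I, a ≠ b ∧ a ≠ c ∧ b ≠ c) (x y : I) :
    ∃ z, z ≠ x ∧ z ≠ y := by
  obtain ⟨a, b, c, hab, hac, hbc⟩ := h
  by_contra! hz
  have ha := hz a; have hb := hz b; have hc := hz c
  by_cases a = x <;> by_cases b = x <;> by_cases c = x <;> simp_all

theorem Before.asymm {x y : I} {L : List I} (h : Before x y L) : ¬ Before y x L :=
  lt_asymm h

theorem Before.trans {x y z : I} {L : List I} (h₁ : Before x y L) (h₂ : Before y z L) :
    Before x z L :=
  lt_trans h₁ h₂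

theorem before_or_before {x y : I} {L : List I} (hxy : x ≠ y) (hx : x ∈ L) :
    Before x y L ∨ Before y x L :=
  lt_or_gt_of_ne ((idxOf_inj hx).not.mpr hxy)

theorem before_of_head?_eq {x y : I} {L : List I} (h : L.head? = some x) (hy : y ≠ x) :
    Before x y L := by
  obtain ⟨t, rfl⟩ : ∃ t, L = x :: t := by cases L <;> simp_all
  simp [Before, idxOf_cons_ne _ hy.symm]

theorem proj2_append (x y : I) (l₁ l₂ : List I) :
    proj2 x y (l₁ ++ l₂) = proj2 x y l₁ ++ proj2 x y l₂ :=
  filter_append ..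

@[simp] theorem proj2_replicate_left (x y : I) (n : ℕ) :
    proj2 x y (replicate n x) = replicate n x := by
  simp [proj2]

@[simp] theorem proj2_replicate_right (x y : I) (n : ℕ) :
    proj2 x y (replicate n y) = replicate n y := by
  simp [proj2]

theorem proj2_replicate_of_ne {x y z : I} (hzx : z ≠ x) (hzy : z ≠ y) (n : ℕ) :
    proj2 x y (replicate n z) = [] := by
  simp [proj2, hzx, hzy]

theorem proj2_comm (x y : I) (l : List I) : proj2 x y l = proj2 y x l := by
  simp only [proj2, or_comm]

@[simp] theorem proj2_proj2 (x y : I) (l : List I) : proj2 x y (proj2 x y l) = proj2 x y l := by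
  simp [proj2, filter_filter]

theorem proj2_proj2_of_ne {x y z : I} (hzy : z ≠ y) (l : List I) :
    proj2 x z (proj2 x y l) = replicate (l.count x) x := by
  rw [proj2, proj2, filter_filter, ← filter_beq]
  refine filter_congr fun u _ => ?_
  by_cases hux : u = x <;> by_cases huz : u = z <;> simp_all

def requestIndices (σ : List I) (x : I) : List ℕ :=
  (range σ.length).filter (fun m => decide (σ[m]? = some x))

theorem requestIndices_cons (a : I) (s : List I) (x : I) :
    requestIndices (a :: s) x =
      (if a = x then [0] else []) ++ (requestIndices s x).map (· + 1) := by
  rw [requestIndices, length_cons, range_succ_eq_map, filter_cons, requestIndices, filter_map]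
  by_cases hax : a = x <;> simp [hax, Function.comp_def]

theorem length_requestIndices (σ : List I) (x : I) :
    (requestIndices σ x).length = σ.count x := by
  induction σ with
  | nil => rfl
  | cons a s ih => by_cases hax : a = x <;> simp [requestIndices_cons, hax, ih]

theorem lt_iff_le_count_take_of_getElem?_requestIndices {σ : List I} {x : I} {k p : ℕ}
    (h : (requestIndices σ x)[k]? = some p) (n : ℕ) :
    p < n ↔ k + 1 ≤ (σ.take n).count x := by
  induction σ generalizing k p n with
  | nil => simp [requestIndices] at h
  | cons a s ih =>
    rw [requestIndices_cons] at h
    cases n with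
    | zero => simp
    | succ n =>
      by_cases hax : a = x
      · subst hax
        cases k with
        | zero =>
          obtain rfl : 0 = p := by simpa using h
          simp
        | succ k =>
          simp only [if_true, singleton_append, getElem?_cons_succ, getElem?_map,
            Option.map_eq_some_iff] at h
          obtain ⟨p, hp, rfl⟩ := h
          simp [ih hp n]
      · simp only [hax, if_false, nil_append, getElem?_map, Option.map_eq_some_iff] at h
        obtain ⟨p, hp, rfl⟩ := h
        simp [hax, ih hp n]

theorem getElem?_requestIndices_sub_one {σ : List I} {x : I} {q : ℕ} (h1 : 1 ≤ q)
    (h2 : q ≤ σ.count x) : (requestIndices σ x)[q - 1]? = some (occPos σ x q) := by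
  have hq : q - 1 < (requestIndices σ x).length := by rw [length_requestIndices]; omega
  rw [getElem?_eq_getElem hq, occPos, ← requestIndices, getD_eq_getElem]

theorem occPos_lt_iff {σ : List I} {x : I} {q : ℕ} (h1 : 1 ≤ q) (h2 : q ≤ σ.count x)
    (n : ℕ) :
    occPos σ x q < n ↔ q ≤ (σ.take n).count x := by
  rw [lt_iff_le_count_take_of_getElem?_requestIndices (getElem?_requestIndices_sub_one h1 h2),
    Nat.sub_add_cancel h1]

theorem getElem?_occPos {σ : List I} {x : I} {q : ℕ} (h1 : 1 ≤ q) (h2 : q ≤ σ.count x) :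
    σ[occPos σ x q]? = some x := by
  have := mem_of_getElem? (getElem?_requestIndices_sub_one h1 h2)
  simp only [requestIndices, mem_filter, decide_eq_true_eq] at this
  exact this.2

theorem MRegular.before_of_replicate (hreg : MRegular M S) {x y : I} (hy : y ≠ x) {m : ℕ}
    (hm : M ≤ m) (σ : List I) :
    Before x y (S (σ ++ replicate m x)) := by
  obtain ⟨k, rfl⟩ := Nat.exists_eq_add_of_le' hm
  rw [replicate_add, ← append_assoc]
  exact before_of_head?_eq (hreg _ x) hy

def sandwich (x v : I) (a m c : ℕ) : List I :=
  replicate a x ++ replicate m v ++ replicate c x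

/-- Both sandwiches are projections of `x^a u^m x^d v^m' x^c`, in which the block `v^m'`
puts `v` in front of `u`. -/
theorem before_sandwich_exchange (hproj : Projective S) (hreg : MRegular M S)
    {x u v : I} (hxu : x ≠ u) (hxv : x ≠ v) (huv : u ≠ v) {m' : ℕ} (hm' : M ≤ m')
    (a d c m : ℕ) (h : Before x v (S (sandwich x v (a + d) m' c))) :
    Before x u (S (sandwich x u a m (d + c))) := by
  set ρ := replicate a x ++ replicate m u ++ replicate d x ++ replicate m' v ++ replicate c x
  have hρxv : proj2 x v ρ = sandwich x v (a + d) m' c := by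
    simp [ρ, sandwich, proj2_append, proj2_replicate_of_ne hxu.symm huv, -append_assoc]
  have hρvu : proj2 v u ρ = replicate m u ++ replicate m' v := by
    simp [ρ, proj2_append, proj2_replicate_of_ne hxv hxu]
  have hρxu : proj2 x u ρ = sandwich x u a m (d + c) := by
    simp [ρ, sandwich, proj2_append, proj2_replicate_of_ne hxv.symm huv.symm]
  have hxvρ : Before x v (S ρ) := by rwa [hproj, hρxv]
  have hvuρ : Before v u (S ρ) := by
    rw [hproj, hρvu]
    exact hreg.before_of_replicate huv hm' _
  rw [← hρxu, ← hproj]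
  exact hxvρ.trans hvuρ

theorem before_sandwich_transfer (hproj : Projective S) (hreg : MRegular M S)
    (hthird : ∀ x y : I, ∃ z, z ≠ x ∧ z ≠ y)
    {x u v : I} (hxu : x ≠ u) (hxv : x ≠ v) {m : ℕ} (hm : M ≤ m)
    (a d c m' : ℕ) (h : Before x v (S (sandwich x v (a + d) m c))) :
    Before x u (S (sandwich x u a m' (d + c))) := by
  by_cases huv : u = v
  · subst huv
    obtain ⟨p, hpx, hpu⟩ := hthird x u
    have hp := before_sandwich_exchange hproj hreg hpx.symm hxu hpu hm a d c M h
    simpa using before_sandwich_exchange hproj hreg hxu hpx.symm hpu.symm le_rfl a 0 (d + c) m'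
      (by simpa using hp)
  · exact before_sandwich_exchange hproj hreg hxu hxv huv hm a d c m' h

/-- The paper's `F(x^i)`: the least `a` such that some partner `v` ends up in front of `x`
after the sandwich `x^a v^M x^(i-a)` (junk value `0` when `x` has no partner). -/
noncomputable def critIndex (S : List I → List I) (M : ℕ) (x : I) (i : ℕ) : ℕ :=
  sInf {a | ∃ v ≠ x, ¬ Before x v (S (sandwich x v a M (i - a)))}

theorem not_before_sandwich_self (hreg : MRegular M S) {x v : I} (hv : v ≠ x) (i : ℕ) :
    ¬ Before x v (S (sandwich x v i M 0)) := by
  simpa [sandwich] using (hreg.before_of_replicate hv.symm le_rfl _).asymm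

theorem critIndex_le (hreg : MRegular M S) {x v : I} (hv : v ≠ x) (i : ℕ) :
    critIndex S M x i ≤ i :=
  Nat.sInf_le ⟨v, hv, by simpa using not_before_sandwich_self hreg hv i⟩

theorem one_le_critIndex (hreg : MRegular M S) {x v : I} (hv : v ≠ x) {i : ℕ} (hi : M ≤ i) :
    1 ≤ critIndex S M x i := by
  rw [Nat.one_le_iff_ne_zero, Ne, critIndex, Nat.sInf_eq_zero, not_or]
  refine ⟨fun ⟨w, hw, hnot⟩ => hnot ?_, Set.nonempty_iff_ne_empty.mp
    ⟨i, v, hv, by simpa using not_before_sandwich_self hreg hv i⟩⟩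
  simpa [sandwich] using hreg.before_of_replicate hw hi (replicate M w)

theorem before_sandwich_iff (hproj : Projective S) (hreg : MRegular M S)
    (hthird : ∀ x y : I, ∃ z, z ≠ x ∧ z ≠ y) {x v : I} (hv : v ≠ x) (a c : ℕ) :
    Before x v (S (sandwich x v a M c)) ↔ a < critIndex S M x (a + c) := by
  constructor
  · intro h
    by_contra! hle
    obtain ⟨w, hw, hnot⟩ : critIndex S M x (a + c) ∈ _ :=
      Nat.sInf_mem ⟨a + c, v, hv, by simpa using not_before_sandwich_self hreg hv (a + c)⟩
    obtain ⟨d, hd⟩ := Nat.exists_eq_add_of_le hle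
    apply hnot
    convert before_sandwich_transfer hproj hreg hthird hw.symm hv.symm le_rfl _ d c M
      (hd ▸ h) using 4
    omega
  · intro h
    have := Nat.notMem_of_lt_sInf h
    simp only [Set.mem_ofPred_eq, not_exists, not_and, not_not] at this
    simpa using this v hv

theorem before_of_count_take (hproj : Projective S) (hreg : MRegular M S)
    (hmem : ∀ σ x, x ∈ S σ) (hthird : ∀ x y : I, ∃ z, z ≠ x ∧ z ≠ y) {x y : I}
    (σ : List I) (n : ℕ) (hx : (σ.take n).count x < critIndex S M x (σ.count x))
    (hy : critIndex S M y (σ.count y) ≤ (σ.take n).count y) :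
    Before x y (S σ) := by
  obtain ⟨z, hzx, hzy⟩ := hthird x y
  set ρ := proj2 x y (σ.take n) ++ replicate M z ++ proj2 x y (σ.drop n)
  have hcount (u : I) : (σ.take n).count u + (σ.drop n).count u = σ.count u := by
    rw [← count_append, take_append_drop]
  have hρxy : proj2 x y ρ = proj2 x y σ := by
    simp only [ρ, proj2_append, proj2_proj2, proj2_replicate_of_ne hzx hzy, append_nil]
    rw [← proj2_append, take_append_drop]
  have hρxz : proj2 x z ρ = sandwich x z ((σ.take n).count x) M ((σ.drop n).count x) := by
    simp only [ρ, sandwich, proj2_append, proj2_proj2_of_ne hzy, proj2_replicate_right]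
  have hρyz : proj2 y z ρ = sandwich y z ((σ.take n).count y) M ((σ.drop n).count y) := by
    simp only [ρ, sandwich, proj2_append, proj2_comm x y, proj2_proj2_of_ne hzx,
      proj2_replicate_right]
  have hxz : Before x z (S ρ) := by
    rw [hproj, hρxz, before_sandwich_iff hproj hreg hthird hzx, hcount]
    exact hx
  have hzy : Before z y (S ρ) := by
    refine (before_or_before hzy.symm (hmem _ _)).resolve_left ?_
    rw [hproj, hρyz, before_sandwich_iff hproj hreg hthird hzy, hcount]
    omega
  rw [hproj, ← hρxy, ← hproj]
  exact hxz.trans hzy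

theorem before_of_occPos_lt (hproj : Projective S) (hreg : MRegular M S)
    (hmem : ∀ σ x, x ∈ S σ) (hthird : ∀ x y : I, ∃ z, z ≠ x ∧ z ≠ y) {x y : I}
    {σ : List I}
    (hx : M ≤ σ.count x) (hy : M ≤ σ.count y)
    (h : occPos σ y (critIndex S M y (σ.count y)) < occPos σ x (critIndex S M x (σ.count x))) :
    Before x y (S σ) := by
  obtain ⟨v, hvx, -⟩ := hthird x x
  obtain ⟨w, hwy, -⟩ := hthird y y
  have hx₁ := one_le_critIndex hreg hvx hx
  have hx₂ := critIndex_le hreg hvx (σ.count x)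
  have hy₁ := one_le_critIndex hreg hwy hy
  have hy₂ := critIndex_le hreg hwy (σ.count y)
  refine before_of_count_take hproj hreg hmem hthird σ
    (occPos σ y (critIndex S M y (σ.count y)) + 1) ?_
    ((occPos_lt_iff hy₁ hy₂ _).mp (by omega))
  rw [← not_le, ← occPos_lt_iff hx₁ hx₂]
  omega

theorem before_iff_occPos_lt (hproj : Projective S) (hreg : MRegular M S)
    (hmem : ∀ σ x, x ∈ S σ) (hthird : ∀ x y : I, ∃ z, z ≠ x ∧ z ≠ y) {x y : I}
    (hxy : x ≠ y)
    {σ : List I} (hx : M ≤ σ.count x) (hy : M ≤ σ.count y) :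
    Before x y (S σ) ↔
      occPos σ y (critIndex S M y (σ.count y)) < occPos σ x (critIndex S M x (σ.count x)) := by
  refine ⟨fun hb => ?_, before_of_occPos_lt hproj hreg hmem hthird hx hy⟩
  rcases lt_trichotomy (occPos σ y (critIndex S M y (σ.count y)))
    (occPos σ x (critIndex S M x (σ.count x))) with hlt | heq | hgt
  · exact hlt
  · obtain ⟨v, hvx, -⟩ := hthird x x
    obtain ⟨w, hwy, -⟩ := hthird y y
    have hσx := getElem?_occPos (one_le_critIndex hreg hvx hx) (critIndex_le hreg hvx _)
    have hσy := getElem?_occPos (one_le_critIndex hreg hwy hy) (critIndex_le hreg hwy _)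
    rw [heq, hσx, Option.some_inj] at hσy
    exact absurd hσy hxy
  · exact absurd (before_of_occPos_lt hproj hreg hmem hthird hy hx hgt) hb.asymm

end CriticalRequests

theorem Mregular_critical_requests_general
    {I : Type} [DecidableEq I] (S : List I → List I) (L0 : List I)
    (huniv : ∀ x : I, x ∈ L0)
    (hperm : ∀ σ, (S σ).Perm L0)
    (hthree : ∃ a b c : I, a ≠ b ∧ a ≠ c ∧ b ≠ c)
    (hproj : Projective S) (M : ℕ) (hreg : MRegular M S) :
    ∃ F : I → ℕ → ℕ,
      (∀ (x : I) (i : ℕ), M ≤ i → 1 ≤ F x i ∧ F x i ≤ i) ∧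
      ∀ (x y : I) (σ : List I), x ≠ y →
        M ≤ σ.count x → M ≤ σ.count y →
        (Before x y (S σ) ↔
          occPos σ y (F y (σ.count y)) < occPos σ x (F x (σ.count x))) := by
  have hthird := exists_ne_ne_of_three hthree
  have hmem (σ : List I) (x : I) : x ∈ S σ := (hperm σ).mem_iff.mpr (huniv x)
  refine ⟨critIndex S M, fun x i hi => ?_, fun x y σ hxy hx hy =>
    before_iff_occPos_lt hproj hreg hmem hthird hxy hx hy⟩
  obtain ⟨v, hvx, -⟩ := hthird x x
  exact ⟨one_le_critIndex hreg hvx hi, critIndex_le hreg hvx i⟩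

/-- A deterministic projective `M`-regular algorithm on a list of at
least three items is governed by critical requests: there is `F` with
`1 ≤ F(x^i) ≤ i` for `i ≥ M` such that whenever `σ` has at least `M` requests to each
of `x` and `y`, item `x` is in front of `y` in `S(σ)` iff the `F(σ_x)`-th request to
`x` occurs after the `F(σ_y)`-th request to `y` in `σ`. -/
theorem Mregular_critical_requests
    {I : Type} [DecidableEq I] (S : List I → List I) (L0 : List I)
    (hnodup : L0.Nodup) (huniv : ∀ x : I, x ∈ L0)
    (hperm : ∀ σ, (S σ).Perm L0)
    (hthree : ∃ a b c : I, a ≠ b ∧ a ≠ c ∧ b ≠ c)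
    (hproj : Projective S) (M : ℕ) (hM : 1 ≤ M) (hreg : MRegular M S) :
    ∃ F : I → ℕ → ℕ,
      (∀ (x : I) (i : ℕ), M ≤ i → 1 ≤ F x i ∧ F x i ≤ i) ∧
      ∀ (x y : I) (σ : List I), x ≠ y →
        M ≤ σ.count x → M ≤ σ.count y →
        (Before x y (S σ) ↔
          occPos σ y (F y (σ.count y)) < occPos σ x (F x (σ.count x))) :=
  Mregular_critical_requests_general S L0 huniv hperm hthree hproj M hreg
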